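/- Let (a_i,b_i)_{i=1}^s be a composition of positive integers with b_s ≥ 2, let λ ∈ ℂ be such that neither λ nor λ−1 is a positive integer and λ ≠ 1, and set λ' = λ−1. Then [{(a_1,1),b_1,…,(a_s,1),b_s};λ] = [{(a_1,0),b_1,…,(a_s,0),b_s};λ'] − (1/λ')·[{(a_1,0),b_1,…,(a_s,0),b_s−1};λ'], where the brackets denote the shifted multiple series defined below. -/

import Mathlib

/-- Strictly decreasing tuples `m 0 > m 1 > ⋯ > m (N-1) ≥ 1` of positive integers,
padded by `0` from position `N` on. -/
def DecTuple (N : ℕ) : Set (ℕ → ℕ) :=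
  {m | (∀ j, j + 1 < N → m (j + 1) < m j) ∧ (∀ j, j < N → 1 ≤ m j) ∧ ∀ j, N ≤ j → m j = 0}

/-- The bracket `[{(a₁,d₁),b₁,…,(a_s,d_s),b_s};λ] =
Σ_{m₁>⋯>m_{B_s}≥1} Πᵢ (m_{B_{i-1}+1} - dᵢ)^{-aᵢ} Π_{j=B_{i-1}+1}^{B_i} (m_j-λ)⁻¹`
(0-based indices). -/
noncomputable def bracket (s : ℕ) (a b d : ℕ → ℕ) (lam : ℂ) : ℂ :=
  ∑' m : DecTuple (∑ t ∈ Finset.range s, b t),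
    ∏ i ∈ Finset.range s,
      (((m.1 (∑ t ∈ Finset.range i, b t) : ℂ) - (d i : ℕ)) ^ a i)⁻¹ *
        ∏ j ∈ Finset.Ico (∑ t ∈ Finset.range i, b t) (∑ t ∈ Finset.range (i + 1), b t),
          ((m.1 j : ℂ) - lam)⁻¹
/-!
Substituting `m = n + 1` entrywise turns `(m - 1)^{-a}` and `(m - λ)^{-1}` into `n^{-a}` and
`(n - λ')^{-1}`, and maps the tuples `m₁ > ⋯ > m_N ≥ 1` bijectively onto the tuples
`n₁ > ⋯ > n_N ≥ 1` together with the tuples `n₁ > ⋯ > n_{N-1} ≥ 1` followed by `n_N = 0`.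
The former give `[…;λ']`; in the latter the entry `n_N = 0` sits at the end of the last block
and contributes the factor `(0 - λ')^{-1}`, leaving `[…, b_s - 1;λ']`. Splitting the sum is
legitimate since the series converge absolutely: the head factor `m₁^{-1} ≤ ∏ⱼ mⱼ^{-1/N}` gives
every index a summable weight `mⱼ^{-1-1/N}`.
-/

open Finset

lemma summable_norm_inv_natCast_sub_mul_rpow (lam : ℂ) {p : ℝ} (hp : 0 < p) :
    Summable fun k : ℕ => ‖((k : ℂ) - lam)⁻¹‖ * (k : ℝ) ^ (-p) := by
  refine Summable.of_norm_bounded_eventually_nat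
    ((Real.summable_nat_rpow.2 (by linarith : -1 + -p < -1)).mul_left 2) ?_
  filter_upwards [tendsto_natCast_atTop_atTop.eventually_ge_atTop (2 * ‖lam‖ + 1)] with k hk
  have hk0 : (0 : ℝ) < k := by linarith [norm_nonneg lam]
  have hlow : (k : ℝ) / 2 ≤ ‖(k : ℂ) - lam‖ := by
    have := norm_sub_norm_le (k : ℂ) lam
    rw [Complex.norm_natCast] at this; linarith
  rw [Real.norm_of_nonneg (by positivity), Real.rpow_add hk0, Real.rpow_neg_one, norm_inv]
  calc ‖(k : ℂ) - lam‖⁻¹ * (k : ℝ) ^ (-p) ≤ ((k : ℝ) / 2)⁻¹ * (k : ℝ) ^ (-p) := by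
        gcongr
    _ = 2 * ((k : ℝ)⁻¹ * (k : ℝ) ^ (-p)) := by field_simp

lemma summable_prod_apply {g : ℕ → ℝ} (hg : Summable g) (hg0 : 0 ≤ g) :
    ∀ n, Summable fun v : Fin n → ℕ => ∏ j, g (v j)
  | 0 => .of_finite
  | n + 1 => by
    rw [← (Fin.consEquiv fun _ => ℕ).summable_iff]
    simpa [Function.comp_def, Fin.consEquiv, Fin.prod_univ_succ] using
      hg.mul_of_nonneg (summable_prod_apply hg hg0 n) hg0 fun v => prod_nonneg fun j _ => hg0 _

namespace DecTuple

variable {N : ℕ} {m : ℕ → ℕ}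

lemma le_apply_zero (hm : m ∈ DecTuple N) {j : ℕ} (hj : j < N) : m j ≤ m 0 := by
  induction j with
  | zero => rfl
  | succ j ih => exact (hm.1 j hj).le.trans (ih (by omega))

lemma injective_restrict : Function.Injective fun m : DecTuple N => fun j : Fin N => m.1 j := by
  rintro ⟨m, hm⟩ ⟨m', hm'⟩ h
  refine Subtype.ext <| funext fun j => show m j = m' j from ?_
  by_cases hj : j < N
  · exact congrFun h ⟨j, hj⟩
  · rw [hm.2.2 j (by omega), hm'.2.2 j (by omega)]

lemma disjoint_pred (hN : N ≠ 0) : Disjoint (DecTuple N) (DecTuple (N - 1)) :=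
  Set.disjoint_left.2 fun _ hm hm' => by
    have := hm.2.1 (N - 1) (by omega); have := hm'.2.2 (N - 1) le_rfl; omega

lemma sub_one_mem (hm : m ∈ DecTuple N) :
    (fun j => m j - 1) ∈ DecTuple N ∪ DecTuple (N - 1) := by
  obtain ⟨hdec, hpos, hzero⟩ := hm
  by_cases hlast : 2 ≤ m (N - 1)
  · refine .inl ⟨fun j hj => ?_, fun j hj => ?_, fun j hj => ?_⟩
    · have := hdec j hj; have := hpos (j + 1) hj; dsimp only; omega
    · by_cases hj' : j + 1 < N
      · have := hdec j hj'; have := hpos (j + 1) hj'; dsimp only; omega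
      · dsimp only; rw [show j = N - 1 by omega]; omega
    · simp [hzero j hj]
  · refine .inr ⟨fun j hj => ?_, fun j hj => ?_, fun j hj => ?_⟩
    · have := hdec j (by omega); have := hpos (j + 1) (by omega); dsimp only; omega
    · have := hdec j (by omega); have := hpos (j + 1) (by omega); dsimp only; omega
    · by_cases hj' : j < N
      · have := hpos j hj'; dsimp only; rw [show j = N - 1 by omega]; omega
      · simp [hzero j (by omega)]

lemma add_one_mem (hn : m ∈ DecTuple N ∪ DecTuple (N - 1)) :
    (fun j => if j < N then m j + 1 else 0) ∈ DecTuple N := by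
  refine ⟨fun j hj => ?_, fun j hj => by simp [hj], fun j hj => by simp [show ¬j < N by omega]⟩
  simp only [hj, (by omega : j < N), if_true, add_lt_add_iff_right]
  rcases hn with ⟨hdec, -, -⟩ | ⟨hdec, hpos, hzero⟩
  · exact hdec j hj
  · by_cases hj' : j + 1 < N - 1
    · exact hdec j hj'
    · rw [hzero (j + 1) (by omega)]; exact hpos j (by omega)

lemma eq_zero_of_mem_union (hn : m ∈ DecTuple N ∪ DecTuple (N - 1)) {j : ℕ} (hj : N ≤ j) :
    m j = 0 := by
  rcases hn with hn | hn
  · exact hn.2.2 j hj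
  · exact hn.2.2 j (by omega)

-- Tuples ending in `1` are sent to tuples of length `N - 1`.
def subOneEquiv (N : ℕ) : DecTuple N ≃ ↥(DecTuple N ∪ DecTuple (N - 1)) where
  toFun m := ⟨fun j => m.1 j - 1, sub_one_mem m.2⟩
  invFun n := ⟨fun j => if j < N then n.1 j + 1 else 0, add_one_mem n.2⟩
  left_inv m := Subtype.ext <| funext fun j => by
    by_cases hj : j < N
    · have := m.2.2.1 j hj; simp only [hj, if_true]; omega
    · simp [hj, m.2.2.2 j (by omega)]
  right_inv n := Subtype.ext <| funext fun j => by
    by_cases hj : j < N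
    · simp [hj]
    · simp [hj, eq_zero_of_mem_union n.2 (by omega : N ≤ j)]

lemma inv_apply_zero_le_prod_rpow (hm : m ∈ DecTuple N) :
    (m 0 : ℝ)⁻¹ ≤ ∏ j ∈ range N, (m j : ℝ) ^ (-(N : ℝ)⁻¹) := by
  rcases Nat.eq_zero_or_pos N with rfl | hN
  · simp [hm.2.2 0 le_rfl]
  have hpos : ∀ j < N, (0 : ℝ) < m j := fun j hj => by exact_mod_cast hm.2.1 j hj
  calc (m 0 : ℝ)⁻¹ = ∏ _j ∈ range N, (m 0 : ℝ) ^ (-(N : ℝ)⁻¹) := by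
        rw [prod_const, card_range, ← Real.rpow_natCast, ← Real.rpow_mul (hpos 0 hN).le,
          neg_mul, inv_mul_cancel₀ (by positivity), Real.rpow_neg_one]
    _ ≤ ∏ j ∈ range N, (m j : ℝ) ^ (-(N : ℝ)⁻¹) := by
      refine prod_le_prod (fun _ _ => by positivity) fun j hj => ?_
      have hj := mem_range.1 hj
      exact Real.rpow_le_rpow_of_nonpos (hpos j hj) (by exact_mod_cast le_apply_zero hm hj)
        (by simp)

lemma summable_inv_apply_zero_mul_prod (lam : ℂ) (N : ℕ) :
    Summable fun m : DecTuple N => (m.1 0 : ℝ)⁻¹ * ∏ j ∈ range N, ‖((m.1 j : ℂ) - lam)⁻¹‖ := by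
  rcases Nat.eq_zero_or_pos N with rfl | hN
  · exact (summable_congr fun m => by simp [m.2.2.2 0 le_rfl]).2 summable_zero
  have hG := (summable_prod_apply (summable_norm_inv_natCast_sub_mul_rpow lam
    (inv_pos.2 (Nat.cast_pos.2 hN))) (fun k => by positivity) N).comp_injective
    injective_restrict
  refine hG.of_nonneg_of_le (fun m => by positivity) fun m => ?_
  calc (m.1 0 : ℝ)⁻¹ * ∏ j ∈ range N, ‖((m.1 j : ℂ) - lam)⁻¹‖
      ≤ (∏ j ∈ range N, (m.1 j : ℝ) ^ (-(N : ℝ)⁻¹)) * ∏ j ∈ range N, ‖((m.1 j : ℂ) - lam)⁻¹‖ := by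
        gcongr; exact inv_apply_zero_le_prod_rpow m.2
    _ = _ := by
        rw [← prod_mul_distrib, ← Fin.prod_univ_eq_prod_range (fun j => _)]
        simp [mul_comm]

end DecTuple

noncomputable def bracketTerm (s : ℕ) (a b d : ℕ → ℕ) (lam : ℂ) (m : ℕ → ℕ) : ℂ :=
  ∏ i ∈ range s, (((m (∑ t ∈ range i, b t) : ℂ) - (d i : ℕ)) ^ a i)⁻¹ *
    ∏ j ∈ Ico (∑ t ∈ range i, b t) (∑ t ∈ range (i + 1), b t), ((m j : ℂ) - lam)⁻¹

lemma bracket_eq_tsum_bracketTerm (s : ℕ) (a b d : ℕ → ℕ) (lam : ℂ) :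
    bracket s a b d lam = ∑' m : DecTuple (∑ t ∈ range s, b t), bracketTerm s a b d lam m :=
  rfl

lemma prod_prod_Ico_sum_range {M : Type*} [CommMonoid M] (f : ℕ → M) (b : ℕ → ℕ) (s : ℕ) :
    ∏ i ∈ range s, ∏ j ∈ Ico (∑ t ∈ range i, b t) (∑ t ∈ range (i + 1), b t), f j
      = ∏ j ∈ range (∑ t ∈ range s, b t), f j := by
  induction s with
  | zero => simp
  | succ s ih =>
    rw [prod_range_succ, ih, prod_range_mul_prod_Ico f (sum_le_sum_of_subset (by simp))]

lemma norm_inv_natCast_pow_le_one (k a : ℕ) : ‖((k : ℂ) ^ a)⁻¹‖ ≤ 1 := by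
  rw [norm_inv, norm_pow, Complex.norm_natCast]
  rcases Nat.eq_zero_or_pos k with rfl | hk
  · rcases a with _ | a <;> simp
  · exact inv_le_one_of_one_le₀ (one_le_pow₀ (by exact_mod_cast hk))

lemma norm_inv_natCast_pow_le_inv {a : ℕ} (ha : a ≠ 0) (k : ℕ) : ‖((k : ℂ) ^ a)⁻¹‖ ≤ (k : ℝ)⁻¹ := by
  rw [norm_inv, norm_pow, Complex.norm_natCast]
  rcases Nat.eq_zero_or_pos k with rfl | hk
  · simp [ha]
  · exact inv_anti₀ (by positivity) (le_self_pow₀ (by exact_mod_cast hk) ha)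

lemma norm_bracketTerm_le {s : ℕ} {a : ℕ → ℕ} (ha : a 0 ≠ 0) (b : ℕ → ℕ) (lam : ℂ) (m : ℕ → ℕ) :
    ‖bracketTerm (s + 1) a b (fun _ => 0) lam m‖
      ≤ (m 0 : ℝ)⁻¹ * ∏ j ∈ range (∑ t ∈ range (s + 1), b t), ‖((m j : ℂ) - lam)⁻¹‖ := by
  simp only [bracketTerm, prod_mul_distrib, norm_mul, norm_prod, Nat.cast_zero, sub_zero,
    prod_prod_Ico_sum_range fun j => ‖((m j : ℂ) - lam)⁻¹‖]
  gcongr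
  rw [prod_range_succ']
  simpa using mul_le_mul (prod_le_one (fun _ _ => norm_nonneg _)
    fun i _ => norm_inv_natCast_pow_le_one _ _) (norm_inv_natCast_pow_le_inv ha (m 0))
    (norm_nonneg _) zero_le_one

lemma summable_bracketTerm {s : ℕ} {a : ℕ → ℕ} (ha : a 0 ≠ 0) {b : ℕ → ℕ} (lam : ℂ) {N : ℕ}
    (hN : ∑ t ∈ range (s + 1), b t = N) :
    Summable fun m : DecTuple N => bracketTerm (s + 1) a b (fun _ => 0) lam m := by
  subst hN
  exact .of_norm_bounded (DecTuple.summable_inv_apply_zero_mul_prod lam _)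
    fun m => norm_bracketTerm_le ha b lam m

section LastBlock

variable {s : ℕ} {b : ℕ → ℕ}

lemma sum_range_ite_eq_of_le (i : ℕ) (hi : i ≤ s) :
    ∑ t ∈ range i, (if t = s then b t - 1 else b t) = ∑ t ∈ range i, b t :=
  sum_congr rfl fun t ht => if_neg (by simp at ht; omega)

lemma sum_range_succ_ite_add_one (hb : 0 < b s) :
    ∑ t ∈ range (s + 1), (if t = s then b t - 1 else b t) + 1 = ∑ t ∈ range (s + 1), b t := by
  rw [sum_range_succ, sum_range_succ, sum_range_ite_eq_of_le s le_rfl, if_pos rfl]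
  omega

lemma bracketTerm_one_eq_bracketTerm_zero (hb : 0 < b s) (a : ℕ → ℕ) (lam : ℂ) {m : ℕ → ℕ}
    (hm : m ∈ DecTuple (∑ t ∈ range (s + 1), b t)) :
    bracketTerm (s + 1) a b (fun _ => 1) lam m
      = bracketTerm (s + 1) a b (fun _ => 0) (lam - 1) (fun j => m j - 1) := by
  have cast_sub_one : ∀ j < ∑ t ∈ range (s + 1), b t, ((m j - 1 : ℕ) : ℂ) = m j - 1 :=
    fun j hj => by rw [Nat.cast_sub (hm.2.1 j hj), Nat.cast_one]
  refine prod_congr rfl fun i hi => ?_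
  have hblock : ∑ t ∈ range (i + 1), b t ≤ ∑ t ∈ range (s + 1), b t :=
    sum_le_sum_of_subset (range_subset_range.2 (mem_range.1 hi))
  have hhead : ∑ t ∈ range i, b t < ∑ t ∈ range (s + 1), b t := by
    rw [sum_range_succ]
    have := sum_le_sum_of_subset (f := b) (range_subset_range.2 (mem_range_succ_iff.1 hi))
    omega
  simp only [Nat.cast_one, Nat.cast_zero, sub_zero, cast_sub_one _ hhead]
  refine congrArg _ (prod_congr rfl fun j hj => ?_)
  rw [cast_sub_one j ((mem_Ico.1 hj).2.trans_le hblock), sub_sub_sub_cancel_right]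

lemma bracketTerm_eq_mul_last (hb : 0 < b s) (a d : ℕ → ℕ) (lam : ℂ) (m : ℕ → ℕ) :
    bracketTerm (s + 1) a b d lam m
      = bracketTerm (s + 1) a (fun t => if t = s then b t - 1 else b t) d lam m
        * ((m (∑ t ∈ range (s + 1), b t - 1) : ℂ) - lam)⁻¹ := by
  unfold bracketTerm
  rw [prod_range_succ, prod_range_succ, mul_assoc (∏ i ∈ range s, _)]
  congr 1
  · refine prod_congr rfl fun i hi => ?_
    have hi := mem_range.1 hi
    rw [sum_range_ite_eq_of_le i hi.le, sum_range_ite_eq_of_le (i + 1) hi]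
  · rw [sum_range_ite_eq_of_le s le_rfl, ← sum_range_succ_ite_add_one hb,
      prod_Ico_succ_top (by rw [sum_range_succ, sum_range_ite_eq_of_le s le_rfl]; omega),
      Nat.add_sub_cancel, mul_assoc]

end LastBlock

theorem bracket_shift_all_general (s : ℕ) (hs : 1 ≤ s) (a b : ℕ → ℕ)
    (ha : ∀ i, i < s → 1 ≤ a i) (hbs : 2 ≤ b (s - 1))
    (lam : ℂ) :
    bracket s a b (fun _ => 1) lam
      = bracket s a b (fun _ => 0) (lam - 1)
        - (lam - 1)⁻¹ *
            bracket s a (fun i => if i = s - 1 then b i - 1 else b i)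
              (fun _ => 0) (lam - 1) := by
  obtain ⟨s, rfl⟩ : ∃ s', s = s' + 1 := ⟨s - 1, by omega⟩
  simp only [Nat.add_sub_cancel] at hbs ⊢
  have ha0 : a 0 ≠ 0 := Nat.one_le_iff_ne_zero.1 (ha 0 s.succ_pos)
  have hb : 0 < b s := by omega
  set N := ∑ t ∈ range (s + 1), b t
  set T := bracketTerm (s + 1) a b (fun _ => 0) (lam - 1)
  have hlen' := sum_range_succ_ite_add_one hb
  have hN : N ≠ 0 := by omega
  have hlen : ∑ t ∈ range (s + 1), (if t = s then b t - 1 else b t) = N - 1 := by omega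
  have hdrop : ∀ n : DecTuple (N - 1), T n
      = -(lam - 1)⁻¹ * bracketTerm (s + 1) a (fun t => if t = s then b t - 1 else b t)
          (fun _ => 0) (lam - 1) n := fun n => by
    simp only [T]
    rw [bracketTerm_eq_mul_last hb, n.2.2.2 _ le_rfl, Nat.cast_zero, zero_sub, inv_neg]; ring
  have hsummable : Summable fun n : DecTuple (N - 1) => T n :=
    (summable_congr hdrop).2 ((summable_bracketTerm ha0 (lam - 1) hlen).mul_left _)
  calc bracket (s + 1) a b (fun _ => 1) lam
      = ∑' n : ↥(DecTuple N ∪ DecTuple (N - 1)), T n := by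
        rw [bracket_eq_tsum_bracketTerm, ← (DecTuple.subOneEquiv N).tsum_eq]
        exact tsum_congr fun m => bracketTerm_one_eq_bracketTerm_zero hb a lam m.2
    _ = ∑' n : DecTuple N, T n + ∑' n : DecTuple (N - 1), T n :=
        (summable_bracketTerm ha0 (lam - 1) rfl).tsum_union_disjoint
          (DecTuple.disjoint_pred hN) hsummable
    _ = _ := by
        rw [tsum_congr hdrop, tsum_mul_left, bracket_eq_tsum_bracketTerm _ _ _ _ (lam - 1),
          bracket_eq_tsum_bracketTerm, hlen]
        ring

/-- **Lemma (iii)(a):** if `b_s ≥ 2` and `λ' = λ - 1` then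
`[{(a₁,1),b₁,…,(a_s,1),b_s};λ]
  = [{(a₁,0),b₁,…,(a_s,0),b_s};λ'] - (1/λ')·[{(a₁,0),b₁,…,(a_s,0),b_s - 1};λ']`. -/
theorem bracket_shift_all (s : ℕ) (hs : 1 ≤ s) (a b : ℕ → ℕ)
    (ha : ∀ i, i < s → 1 ≤ a i) (hb : ∀ i, i < s → 1 ≤ b i) (hbs : 2 ≤ b (s - 1))
    (lam : ℂ) (hlam : ∀ p : ℕ, 0 < p → lam ≠ (p : ℂ))
    (hlam' : ∀ p : ℕ, 0 < p → lam - 1 ≠ (p : ℂ)) (hlam1 : lam ≠ 1) :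
    bracket s a b (fun _ => 1) lam
      = bracket s a b (fun _ => 0) (lam - 1)
        - (lam - 1)⁻¹ *
            bracket s a (fun i => if i = s - 1 then b i - 1 else b i)
              (fun _ => 0) (lam - 1) :=
  bracket_shift_all_general s hs a b ha hbs lam
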